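/- None of the topological groups (G, τ), (S, τ|S) and the quotient group G/S (with the quotient topology) is FSIN: each of them admits a bounded left uniformly continuous real-valued function that is not right uniformly continuous. -/

import Mathlib

/-!
For `G` and `S` take `f g = [g 1 < g 0]`. It is constant on left cosets of the open stabilizer
of `0` and `1`, while `g` and `g * swap 0 1` differ on the left by the transposition
`swap (g 0) (g 1)`, which preserves every block of a finite partition as soon as `g 0` and `g 1`
lie in one block; by pigeonhole such a `g` exists already in `S`, and there `f` jumps by `1`.

For `G ⧸ S`, read `x ↦ g⁻¹ x mod 3` as a coloring in which color `2` is blank, and let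
`f g = 1` iff it has infinitely many pairs of consecutive zeros. Finite changes do not affect
this, so `f` descends to `G ⧸ S`. Given a finite partition with an infinite block `P`, writing
the patterns `0,1,2,0,1,2,…` and `0,0,1,1,2,2,…` along `P` (blank off `P`) gives two colorings
with infinite color classes: both are of the form `x ↦ g⁻¹ x mod 3`, and they differ by a
permutation preserving every block, but only the second has repeated zeros.
-/

/-- The Samuel (precompact) uniformity on `ℕ`: a basis of entourages is given by the sets
`⋃ i, A i × A i` for `{A 1, …, A n}` a finite partition of `ℕ`; equivalently, it is the
infimum of the uniformities pulled back from finite discrete uniform spaces, a basis being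
given by the sets `{(x, y) | c x = c y}` for `c : ℕ → Fin n`. -/
noncomputable def samuelNat : UniformSpace ℕ :=
  ⨅ (n : ℕ) (c : ℕ → Fin n), UniformSpace.comap c ⊥

/-- The topology `τ` on `G = Sym(ℕ)`: the topology of uniform convergence when the target `ℕ`
carries the Samuel uniformity.  A basis of neighborhoods of the identity is given by the
subgroups `H_π = {g : g (A i) = A i, i = 1, …, n}`, `π = {A 1, …, A n}` a finite partition
of `ℕ`. -/
noncomputable def tauPerm : TopologicalSpace (Equiv.Perm ℕ) :=
  TopologicalSpace.induced (fun g => UniformFun.ofFun (⇑g))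
    (@UniformFun.uniformSpace ℕ ℕ samuelNat).toTopologicalSpace

/-- The subgroup `S` of finitary permutations of `ℕ`, i.e. those moving only finitely many
points. -/
def finitaryS : Subgroup (Equiv.Perm ℕ) where
  carrier := {g | {x | g x ≠ x}.Finite}
  one_mem' := by simp
  mul_mem' := by
    intro a b ha hb
    refine (ha.union hb).subset fun x hx => ?_
    by_cases h : b x = x
    · exact Or.inl (by simpa [Equiv.Perm.mul_apply, h] using hx)
    · exact Or.inr h
  inv_mem' := by
    intro a ha
    have h : {x | a⁻¹ x ≠ x} = {x | a x ≠ x} := by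
      ext x
      simp only [Set.mem_setOf_eq, ne_eq, Equiv.Perm.inv_eq_iff_eq]
      exact not_congr eq_comm
    show {x | a⁻¹ x ≠ x}.Finite
    rw [h]; exact ha

/-- Right uniform continuity of `f : G → Y`: a basis of the right uniformity of a topological
group `G` is given by the sets `{(g, h) : g * h⁻¹ ∈ U}`, `U` a neighborhood of the identity. -/
def RightUC {G : Type*} [Group G] (t : TopologicalSpace G) {Y : Type*} [UniformSpace Y]
    (f : G → Y) : Prop :=
  ∀ V ∈ uniformity Y, ∃ U ∈ @nhds G t 1, ∀ g h : G, g * h⁻¹ ∈ U → (f g, f h) ∈ V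

/-- Left uniform continuity of `f : G → Y`: a basis of the left uniformity of a topological
group `G` is given by the sets `{(g, h) : g⁻¹ * h ∈ U}`, `U` a neighborhood of the identity. -/
def LeftUC {G : Type*} [Group G] (t : TopologicalSpace G) {Y : Type*} [UniformSpace Y]
    (f : G → Y) : Prop :=
  ∀ V ∈ uniformity Y, ∃ U ∈ @nhds G t 1, ∀ g h : G, g⁻¹ * h ∈ U → (f g, f h) ∈ V

/-- `f : G → Y` is right proximally continuous: for every bounded uniformly continuous
`φ : Y → ℝ`, the composition `φ ∘ f` is right uniformly continuous. -/
def RightProxCont {G : Type*} [Group G] (t : TopologicalSpace G) {Y : Type*} [UniformSpace Y]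
    (f : G → Y) : Prop :=
  ∀ φ : Y → ℝ, UniformContinuous φ → (∃ C, ∀ y, |φ y| ≤ C) → RightUC t (φ ∘ f)

/-- `S` is a normal subgroup of `G`. -/
instance finitaryS_normal : finitaryS.Normal := by
  constructor
  intro h hh g
  have hsub : {x | (g * h * g⁻¹) x ≠ x} ⊆ (fun x => g⁻¹ x) ⁻¹' {x | h x ≠ x} := by
    intro x hx hc
    apply hx
    simp only [Equiv.Perm.mul_apply, hc]; exact g.apply_symm_apply x
  exact (hh.preimage (fun y _ z _ hyz => (Equiv.injective g⁻¹) hyz)).subset hsub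

/-- A topological group fails to be FSIN if it admits a bounded left uniformly continuous
real-valued function which is not right uniformly continuous. -/
def NotFSIN {G : Type*} [Group G] (t : TopologicalSpace G) : Prop :=
  ∃ f : G → ℝ, (∃ C, ∀ g, |f g| ≤ C) ∧ LeftUC t f ∧ ¬RightUC t f

open Filter Topology Cardinal Equiv

section UniformContinuity

variable {G : Type*} [Group G]

def rightPeriods {β : Type*} (f : G → β) : Subgroup G where
  carrier := {k | ∀ g, f (g * k) = f g}
  one_mem' g := by rw [mul_one]
  mul_mem' {a b} ha hb g := by rw [← mul_assoc, hb, ha]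
  inv_mem' {a} ha g := by rw [← ha (g * a⁻¹), inv_mul_cancel_right]

theorem leftUC_of_le_rightPeriods (t : TopologicalSpace G) {Y : Type*} [UniformSpace Y]
    {f : G → Y} {H : Subgroup G} (hH : (H : Set G) ∈ @nhds G t 1) (hf : H ≤ rightPeriods f) :
    LeftUC t f := by
  intro V hV
  refine ⟨H, hH, fun g h hgh => ?_⟩
  rw [← mul_inv_cancel_left g h, hf hgh g]
  exact refl_mem_uniformity hV

theorem not_rightUC_of_forall_mem_nhds (t : TopologicalSpace G) {Y : Type*}
    [PseudoMetricSpace Y] {f : G → Y} {ε : ℝ} (hε : 0 < ε)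
    (hf : ∀ U ∈ @nhds G t 1, ∃ g h, g * h⁻¹ ∈ U ∧ ε ≤ dist (f g) (f h)) :
    ¬RightUC t f := by
  intro hR
  obtain ⟨U, hU, hUε⟩ := hR _ (Metric.dist_mem_uniformity hε)
  obtain ⟨g, h, hgh, hε_le⟩ := hf U hU
  exact (hUε g h hgh).not_ge hε_le

theorem comap_rightPeriods_le {G' β : Type*} [Group G'] (φ : G' →* G) (f : G → β) :
    (rightPeriods f).comap φ ≤ rightPeriods (f ∘ φ) := fun k hk g => by
  simp only [Function.comp_apply, map_mul]
  exact hk (φ g)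

def liftOfLeRightPeriods {β : Type*} (f : G → β) (N : Subgroup G)
    (hN : N ≤ rightPeriods f) : G ⧸ N → β :=
  Quotient.lift f fun a b hab => by
    rw [← mul_inv_cancel_left a b, hN (QuotientGroup.leftRel_apply.1 hab) a]

theorem map_le_rightPeriods_liftOfLeRightPeriods {β : Type*} {f : G → β} {N : Subgroup G}
    [N.Normal] (hN : N ≤ rightPeriods f) {H : Subgroup G} (hH : H ≤ rightPeriods f) :
    H.map (QuotientGroup.mk' N) ≤ rightPeriods (liftOfLeRightPeriods f N hN) := by
  rw [Subgroup.map_le_iff_le_comap]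
  intro k hk q
  induction q using QuotientGroup.induction_on with
  | H g => exact hH hk g

end UniformContinuity

section Neighborhoods

def fiberStab {α : Type*} (c : ℕ → α) : Subgroup (Perm ℕ) where
  carrier := {g | c ∘ ⇑g = c}
  one_mem' := rfl
  mul_mem' {a b} (ha : c ∘ ⇑a = c) (hb : c ∘ ⇑b = c) := by
    rw [Set.mem_ofPred_eq, Perm.coe_mul, ← Function.comp_assoc, ha, hb]
  inv_mem' {a} (ha : c ∘ ⇑a = c) := by
    rw [Set.mem_ofPred_eq, Perm.inv_def, Equiv.comp_symm_eq, ha]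

theorem mem_fiberStab {α : Type*} {c : ℕ → α} {g : Perm ℕ} :
    g ∈ fiberStab c ↔ ∀ x, c (g x) = c x :=
  funext_iff

theorem swap_mem_fiberStab {α : Type*} {c : ℕ → α} {a b : ℕ} (h : c a = c b) :
    swap a b ∈ fiberStab c := by
  refine mem_fiberStab.2 fun x => ?_
  rcases eq_or_ne x a with rfl | hxa
  · rw [swap_apply_left, h]
  rcases eq_or_ne x b with rfl | hxb
  · rw [swap_apply_right, h]
  · rw [swap_apply_of_ne_of_ne hxa hxb]

theorem mem_uniformity_samuelNat {s : Set (ℕ × ℕ)} :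
    s ∈ @uniformity ℕ samuelNat ↔ ∃ (n : ℕ) (c : ℕ → Fin n), {p | c p.1 = c p.2} ⊆ s := by
  have huniformity : @uniformity ℕ samuelNat =
      ⨅ i : Σ n : ℕ, ℕ → Fin n, 𝓟 {p : ℕ × ℕ | i.2 p.1 = i.2 p.2} := by
    rw [iInf_sigma, samuelNat, iInf_uniformity]
    refine iInf_congr fun n => ?_
    rw [iInf_uniformity]
    refine iInf_congr fun c => ?_
    rw [uniformity_comap, bot_uniformity, comap_principal]
    rfl
  -- Two finite colorings are refined by their product coloring.
  have hdirected : Directed (· ≥ ·) fun i : Σ n : ℕ, ℕ → Fin n =>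
      𝓟 {p : ℕ × ℕ | i.2 p.1 = i.2 p.2} := by
    rintro ⟨n₁, c₁⟩ ⟨n₂, c₂⟩
    refine ⟨⟨n₁ * n₂, fun x => finProdFinEquiv (c₁ x, c₂ x)⟩, ?_, ?_⟩ <;>
    · refine principal_mono.2 fun p hp => ?_
      have := Prod.ext_iff.1 (finProdFinEquiv.injective hp)
      simp_all
  have : Nonempty (Σ n : ℕ, ℕ → Fin n) := ⟨⟨1, 0⟩⟩
  rw [huniformity, mem_iInf_of_directed hdirected]
  simp [Sigma.exists]

theorem setOf_comp_eq_mem_nhds {n : ℕ} (c : ℕ → Fin n) (g : Perm ℕ) :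
    {h : Perm ℕ | c ∘ ⇑h = c ∘ ⇑g} ∈ @nhds _ tauPerm g := by
  let _ : UniformSpace ℕ := samuelNat
  rw [tauPerm, nhds_induced, nhds_eq_comap_uniformity, comap_comap]
  refine mem_comap.2 ⟨UniformFun.gen ℕ ℕ {p | c p.1 = c p.2}, ?_, fun h hh => ?_⟩
  · exact (UniformFun.hasBasis_uniformity ℕ ℕ).mem_of_mem
      (mem_uniformity_samuelNat.2 ⟨n, c, subset_rfl⟩)
  · exact funext fun x => (hh x).symm

theorem fiberStab_mem_nhds {n : ℕ} (c : ℕ → Fin n) :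
    (fiberStab c : Set (Perm ℕ)) ∈ @nhds _ tauPerm 1 :=
  setOf_comp_eq_mem_nhds c 1

theorem exists_fiberStab_subset {U : Set (Perm ℕ)} (hU : U ∈ @nhds _ tauPerm 1) :
    ∃ (n : ℕ) (c : ℕ → Fin n), (fiberStab c : Set (Perm ℕ)) ⊆ U := by
  let _ : UniformSpace ℕ := samuelNat
  rw [tauPerm, nhds_induced, nhds_eq_comap_uniformity, comap_comap, mem_comap] at hU
  obtain ⟨V, hV, hVU⟩ := hU
  obtain ⟨V', hV', hgen⟩ := (UniformFun.hasBasis_uniformity ℕ ℕ).mem_iff.1 hV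
  obtain ⟨n, c, hc⟩ := mem_uniformity_samuelNat.1 hV'
  exact ⟨n, c, fun g hg => hVU (hgen fun x => hc (congrFun hg x).symm)⟩

theorem isOpen_of_fiberStab_le {n : ℕ} (c : ℕ → Fin n) {K : Subgroup (Perm ℕ)}
    (hK : fiberStab c ≤ K) : IsOpen[tauPerm] (K : Set (Perm ℕ)) := by
  refine (@isOpen_iff_mem_nhds _ tauPerm _).2 fun k hk => ?_
  refine mem_of_superset (setOf_comp_eq_mem_nhds c k) fun h hh => ?_
  have hhk : h * k⁻¹ ∈ fiberStab c := by
    rw [mem_fiberStab]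
    intro x
    simpa using congrFun hh (k⁻¹ x)
  simpa using K.mul_mem (hK hhk) hk

end Neighborhoods

section Inversion

noncomputable def inversionIndicator (g : Perm ℕ) : ℝ := if g 1 < g 0 then 1 else 0

theorem abs_inversionIndicator_le (g : Perm ℕ) : |inversionIndicator g| ≤ 1 := by
  unfold inversionIndicator
  split_ifs <;> simp

def colorZeroOne (x : ℕ) : Fin 3 := Fin.ofNat 3 (min x 2)

theorem fiberStab_colorZeroOne_le_rightPeriods :
    fiberStab colorZeroOne ≤ rightPeriods inversionIndicator := by
  intro v hv g
  have hfix (x : ℕ) (hx : x < 2) : v x = x := by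
    have := Fin.ext_iff.1 (mem_fiberStab.1 hv x)
    simp only [colorZeroOne, Fin.val_ofNat] at this
    omega
  simp only [inversionIndicator, Perm.coe_mul, Function.comp_apply, hfix 0 two_pos,
    hfix 1 one_lt_two]

theorem dist_inversionIndicator_mul_swap {g : Perm ℕ} (hg : g 0 ≠ g 1) :
    dist (inversionIndicator g) (inversionIndicator (g * swap 0 1)) = 1 := by
  simp only [inversionIndicator, Perm.coe_mul, Function.comp_apply, swap_apply_left,
    swap_apply_right, Real.dist_eq]
  rcases hg.lt_or_gt with h | h
  · simp [h, h.not_gt]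
  · simp [h, h.not_gt]

theorem mul_inv_mul_swap_mem_fiberStab {α : Type*} {c : ℕ → α} {g : Perm ℕ}
    (hg : c (g 0) = c (g 1)) : g * (g * swap 0 1)⁻¹ ∈ fiberStab c := by
  rw [mul_inv_rev, swap_inv, ← mul_assoc, ← swap_apply_apply]
  exact swap_mem_fiberStab hg

theorem swap_mem_finitaryS (a b : ℕ) : swap a b ∈ finitaryS :=
  (Set.toFinite {a, b}).subset fun x hx => by
    by_contra hab
    simp only [Set.mem_insert_iff, Set.mem_singleton_iff, not_or] at hab
    exact hx (swap_apply_of_ne_of_ne hab.1 hab.2)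

theorem exists_mem_finitaryS_apply_ne_and_color_eq {n : ℕ} (c : ℕ → Fin n) :
    ∃ g ∈ finitaryS, g 0 ≠ g 1 ∧ c (g 0) = c (g 1) := by
  obtain ⟨a, b, hab, hc⟩ := Finite.exists_ne_map_eq_of_infinite fun x => c (x + 2)
  have h0 : (swap 0 (a + 2) * swap 1 (b + 2)) 0 = a + 2 := by
    simp [swap_apply_of_ne_of_ne]
  have h1 : (swap 0 (a + 2) * swap 1 (b + 2)) 1 = b + 2 := by
    simp [swap_apply_of_ne_of_ne, hab.symm]
  refine ⟨swap 0 (a + 2) * swap 1 (b + 2),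
    mul_mem (swap_mem_finitaryS _ _) (swap_mem_finitaryS _ _), ?_, ?_⟩
  · rw [h0, h1]; omega
  · rw [h0, h1]; exact hc

end Inversion

section RepeatedZeros

/-- Color `2` counts as blank: `x` and the next non-blank point after it both have color `0`. -/
def IsRepeatedZero (d : ℕ → Fin 3) (x : ℕ) : Prop :=
  d x = 0 ∧ ∃ y, x < y ∧ d y = 0 ∧ ∀ z, x < z → z < y → d z = 2

open Classical in
noncomputable def repeatIndicator (d : ℕ → Fin 3) : ℝ :=
  if {x | IsRepeatedZero d x}.Infinite then 1 else 0

theorem abs_repeatIndicator_le (d : ℕ → Fin 3) : |repeatIndicator d| ≤ 1 := by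
  unfold repeatIndicator
  split_ifs <;> simp

theorem repeatIndicator_eq_of_infinite_iff {d₁ d₂ : ℕ → Fin 3}
    (h : {x | IsRepeatedZero d₁ x}.Infinite ↔ {x | IsRepeatedZero d₂ x}.Infinite) :
    repeatIndicator d₁ = repeatIndicator d₂ := by
  unfold repeatIndicator
  split_ifs <;> simp_all

theorem isRepeatedZero_congr {d₁ d₂ : ℕ → Fin 3} {m : ℕ} (h : ∀ y, m ≤ y → d₁ y = d₂ y)
    {x : ℕ} (hx : m ≤ x) : IsRepeatedZero d₁ x ↔ IsRepeatedZero d₂ x := by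
  unfold IsRepeatedZero
  rw [h x hx]
  refine and_congr_right' (exists_congr fun y => and_congr_right fun hxy => ?_)
  rw [h y (by omega)]
  exact and_congr_right' (forall₂_congr fun z hxz => by rw [h z (by omega)])

theorem repeatIndicator_congr {d₁ d₂ : ℕ → Fin 3} (h : d₁ =ᶠ[cofinite] d₂) :
    repeatIndicator d₁ = repeatIndicator d₂ := by
  rw [Nat.cofinite_eq_atTop] at h
  obtain ⟨m, hm⟩ := eventually_atTop.1 h
  refine repeatIndicator_eq_of_infinite_iff ?_
  rw [← Nat.frequently_atTop_iff_infinite, ← Nat.frequently_atTop_iff_infinite]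
  exact frequently_congr (eventually_atTop.2 ⟨m, fun x hx => isRepeatedZero_congr hm hx⟩)

def mod3 (i : ℕ) : Fin 3 := Fin.ofNat 3 i

def halfMod3 (i : ℕ) : Fin 3 := Fin.ofNat 3 (i / 2)

theorem repeatIndicator_mod3 : repeatIndicator mod3 = 0 := by
  have hempty : {x | IsRepeatedZero mod3 x} = ∅ := by
    refine Set.eq_empty_of_forall_notMem fun x ⟨hx, y, hxy, hy, hblank⟩ => ?_
    have h := hblank (x + 1)
    simp only [mod3, Fin.ext_iff, Fin.val_ofNat] at hx hy h
    omega
  simp [repeatIndicator, hempty]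

theorem repeatIndicator_halfMod3 : repeatIndicator halfMod3 = 1 := by
  have hrepeat (i : ℕ) : IsRepeatedZero halfMod3 (6 * i) := by
    refine ⟨?_, 6 * i + 1, by omega, ?_, fun z hz hz' => by omega⟩ <;>
    · simp only [halfMod3, Fin.ext_iff, Fin.val_ofNat]; omega
  have hinf : {x | IsRepeatedZero halfMod3 x}.Infinite :=
    Set.infinite_of_injective_forall_mem (fun a b h => by simpa using h) hrepeat
  simp [repeatIndicator, hinf]

theorem setOf_mod3_eq_infinite (j : Fin 3) : {i | mod3 i = j}.Infinite :=
  Set.infinite_of_injective_forall_mem (f := fun i => 3 * i + j)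
    (fun a b h => by simpa using h)
    fun i => Fin.ext (by simp only [mod3, Fin.val_ofNat]; omega)

theorem setOf_halfMod3_eq_infinite (j : Fin 3) : {i | halfMod3 i = j}.Infinite :=
  Set.infinite_of_injective_forall_mem (f := fun i => 6 * i + 2 * j)
    (fun a b h => by simpa using h)
    fun i => Fin.ext (by simp only [halfMod3, Fin.val_ofNat]; omega)

end RepeatedZeros

section Spread

open Nat

variable (p : ℕ → Prop) [DecidablePred p]

def spread (q : ℕ → Fin 3) (x : ℕ) : Fin 3 := if p x then q (count p x) else 2

variable {p} {q : ℕ → Fin 3}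

theorem spread_eq_two_or_exists_nth_eq (x : ℕ) :
    spread p q x = 2 ∨ ∃ i, nth p i = x := by
  by_cases hx : p x
  · exact Or.inr ⟨count p x, nth_count hx⟩
  · exact Or.inl (if_neg hx)

variable (hp : {x | p x}.Infinite)
include hp

theorem spread_nth (i : ℕ) : spread p q (nth p i) = q i := by
  rw [spread, if_pos (nth_mem_of_infinite hp i), count_nth_of_infinite hp]

theorem isRepeatedZero_spread_nth_iff (i : ℕ) :
    IsRepeatedZero (spread p q) (nth p i) ↔ IsRepeatedZero q i := by
  simp only [IsRepeatedZero, spread_nth hp]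
  refine and_congr_right' ⟨fun ⟨y, hiy, hy, hblank⟩ => ?_, fun ⟨j, hij, hj, hblank⟩ => ?_⟩
  · obtain ⟨j, rfl⟩ := (spread_eq_two_or_exists_nth_eq y).resolve_left (by rw [hy]; decide)
    refine ⟨j, (nth_lt_nth hp).1 hiy, by rwa [spread_nth hp] at hy, fun l hil hlj => ?_⟩
    rw [← spread_nth hp (q := q) l]
    exact hblank _ ((nth_lt_nth hp).2 hil) ((nth_lt_nth hp).2 hlj)
  · refine ⟨nth p j, (nth_lt_nth hp).2 hij, by rwa [spread_nth hp], fun z hiz hzj => ?_⟩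
    obtain hz | ⟨l, rfl⟩ := spread_eq_two_or_exists_nth_eq (p := p) (q := q) z
    · exact hz
    · rw [spread_nth hp]
      exact hblank l ((nth_lt_nth hp).1 hiz) ((nth_lt_nth hp).1 hzj)

theorem repeatIndicator_spread : repeatIndicator (spread p q) = repeatIndicator q := by
  have himage : {x | IsRepeatedZero (spread p q) x} = nth p '' {i | IsRepeatedZero q i} := by
    ext x
    refine ⟨fun hx => ?_, ?_⟩
    · obtain ⟨i, rfl⟩ := (spread_eq_two_or_exists_nth_eq x).resolve_left (by rw [hx.1]; decide)
      exact ⟨i, (isRepeatedZero_spread_nth_iff hp i).1 hx, rfl⟩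
    · rintro ⟨i, hi, rfl⟩
      exact (isRepeatedZero_spread_nth_iff hp i).2 hi
  exact repeatIndicator_eq_of_infinite_iff <| by
    rw [himage, Set.infinite_image_iff (nth_injective hp).injOn]

theorem setOf_and_spread_eq_infinite {j : Fin 3} (hq : {i | q i = j}.Infinite) :
    {x | p x ∧ spread p q x = j}.Infinite := by
  have := hq.to_subtype
  exact Set.infinite_of_injective_forall_mem (f := fun i : {i | q i = j} => nth p i)
    (fun a b h => Subtype.ext (nth_injective hp h))
    fun i => ⟨nth_mem_of_infinite hp i, by rw [spread_nth hp]; exact i.2⟩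

end Spread

section Recoloring

theorem exists_perm_comp_eq {α β : Type*} (d d' : β → α)
    (h : ∀ a, #{x // d x = a} = #{x // d' x = a}) : ∃ σ : Perm β, d' ∘ σ = d :=
  ⟨ofFiberEquiv fun a => (Cardinal.eq.1 (h a)).some, funext (ofFiberEquiv_map _)⟩

theorem mk_eq_of_infinite {s t : Set ℕ} (hs : s.Infinite) (ht : t.Infinite) : #s = #t := by
  have := hs.to_subtype
  have := ht.to_subtype
  rw [mk_eq_aleph0, mk_eq_aleph0]

theorem exists_perm_comp_eq_of_infinite {α : Type*} {d d' : ℕ → α}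
    (hd : ∀ a, {x | d x = a}.Infinite) (hd' : ∀ a, {x | d' x = a}.Infinite) :
    ∃ σ : Perm ℕ, d' ∘ σ = d :=
  exists_perm_comp_eq d d' fun a => mk_eq_of_infinite (hd a) (hd' a)

end Recoloring

section Quotient

theorem fiberStab_le_rightPeriods_comp_inv {α β : Type*} (Φ : (ℕ → α) → β) (c : ℕ → α) :
    fiberStab c ≤ rightPeriods fun g : Perm ℕ => Φ (c ∘ ⇑g⁻¹) := fun v hv g => by
  have hv' : c ∘ ⇑v⁻¹ = c := inv_mem hv
  change Φ (c ∘ ⇑(g * v)⁻¹) = Φ (c ∘ ⇑g⁻¹)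
  rw [mul_inv_rev, Perm.coe_mul, ← Function.comp_assoc, hv']

theorem comp_eventuallyEq_of_mem_finitaryS {α : Type*} (d : ℕ → α) {s : Perm ℕ}
    (hs : s ∈ finitaryS) : d ∘ ⇑s =ᶠ[cofinite] d :=
  eventually_cofinite.2 <| (show {x | s x ≠ x}.Finite from hs).subset fun x hx hsx =>
    hx (by rw [Function.comp_apply, hsx])

noncomputable def mod3RepeatIndicator (g : Perm ℕ) : ℝ := repeatIndicator (mod3 ∘ ⇑g⁻¹)

theorem finitaryS_le_rightPeriods_mod3RepeatIndicator :
    finitaryS ≤ rightPeriods mod3RepeatIndicator := fun s hs g => by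
  refine repeatIndicator_congr ?_
  rw [mul_inv_rev, Perm.coe_mul, ← Function.comp_assoc]
  exact (comp_eventuallyEq_of_mem_finitaryS mod3 (inv_mem hs)).comp_tendsto
    (Equiv.injective _).tendsto_cofinite

noncomputable def quotientRepeatIndicator : Perm ℕ ⧸ finitaryS → ℝ :=
  liftOfLeRightPeriods mod3RepeatIndicator finitaryS
    finitaryS_le_rightPeriods_mod3RepeatIndicator

theorem isOpen_map_fiberStab {n : ℕ} (c : ℕ → Fin n) :
    IsOpen[TopologicalSpace.coinduced QuotientGroup.mk tauPerm]
      ((fiberStab c).map (QuotientGroup.mk' finitaryS) : Set (Perm ℕ ⧸ finitaryS)) := by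
  rw [isOpen_coinduced]
  refine isOpen_of_fiberStab_le c (K := ((fiberStab c).map (QuotientGroup.mk' finitaryS)).comap
    (QuotientGroup.mk' finitaryS)) ?_
  rw [Subgroup.comap_map_eq]
  exact le_sup_left

theorem mk_fiber_prod_spread_eq {n : ℕ} {c : ℕ → Fin n} {k : Fin n}
    [DecidablePred (c · = k)] (hk : {x | c x = k}.Infinite) {q q' : ℕ → Fin 3}
    (hq : ∀ j, {i | q i = j}.Infinite) (hq' : ∀ j, {i | q' i = j}.Infinite) (a : Fin n × Fin 3) :
    #{x // (c x, spread (c · = k) q x) = a} = #{x // (c x, spread (c · = k) q' x) = a} := by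
  obtain ⟨i, j⟩ := a
  by_cases hi : i = k
  · subst hi
    have hinf (r : ℕ → Fin 3) (hr : ∀ j, {i | r i = j}.Infinite) :
        {x | (c x, spread (c · = i) r x) = (i, j)}.Infinite :=
      (setOf_and_spread_eq_infinite hk (hr j)).mono fun x hx => Prod.ext hx.1 hx.2
    exact mk_eq_of_infinite (hinf q hq) (hinf q' hq')
  · congr 2
    funext x
    by_cases hx : c x = k
    · simp [hx, Ne.symm hi]
    · simp [spread, hx]

theorem exists_mod3RepeatIndicator_eq_zero_one {n : ℕ} (c : ℕ → Fin n) :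
    ∃ g h : Perm ℕ, g * h⁻¹ ∈ fiberStab c ∧
      mod3RepeatIndicator g = 0 ∧ mod3RepeatIndicator h = 1 := by
  classical
  obtain ⟨k, hk⟩ := Finite.exists_infinite_fiber c
  have hp : {x | c x = k}.Infinite := Set.infinite_coe_iff.1 hk
  obtain ⟨g, hg⟩ := exists_perm_comp_eq_of_infinite setOf_mod3_eq_infinite fun j =>
    (setOf_and_spread_eq_infinite hp (setOf_mod3_eq_infinite j)).mono fun x hx => hx.2
  obtain ⟨u, hu⟩ := exists_perm_comp_eq _ _ <|
    mk_fiber_prod_spread_eq hp setOf_mod3_eq_infinite setOf_halfMod3_eq_infinite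
  have hg' : mod3 ∘ ⇑g⁻¹ = spread (c · = k) mod3 := (comp_symm_eq _ _ _).2 hg.symm
  refine ⟨g, u * g, ?_, ?_, ?_⟩
  · rw [mul_inv_rev, mul_inv_cancel_left]
    exact inv_mem (funext fun x => congrArg Prod.fst (congrFun hu x))
  · rw [mod3RepeatIndicator, hg', repeatIndicator_spread hp, repeatIndicator_mod3]
  · have hu' : spread (c · = k) mod3 ∘ ⇑u⁻¹ = spread (c · = k) halfMod3 :=
      (comp_symm_eq _ _ _).2 (funext fun x => congrArg Prod.snd (congrFun hu x)).symm
    rw [mod3RepeatIndicator, mul_inv_rev, Perm.coe_mul, ← Function.comp_assoc, hg', hu',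
      repeatIndicator_spread hp, repeatIndicator_halfMod3]

end Quotient

theorem notFSIN_tauPerm : NotFSIN tauPerm := by
  refine ⟨inversionIndicator, ⟨1, abs_inversionIndicator_le⟩,
    leftUC_of_le_rightPeriods tauPerm (fiberStab_mem_nhds colorZeroOne)
      fiberStab_colorZeroOne_le_rightPeriods,
    not_rightUC_of_forall_mem_nhds tauPerm one_pos fun U hU => ?_⟩
  obtain ⟨n, c, hc⟩ := exists_fiberStab_subset hU
  obtain ⟨g, -, hne, hgc⟩ := exists_mem_finitaryS_apply_ne_and_color_eq c
  exact ⟨g, g * swap 0 1, hc (mul_inv_mul_swap_mem_fiberStab hgc),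
    (dist_inversionIndicator_mul_swap hne).ge⟩

theorem notFSIN_finitaryS :
    NotFSIN (TopologicalSpace.induced (Subtype.val : finitaryS → Perm ℕ) tauPerm) := by
  let _ : TopologicalSpace (Perm ℕ) := tauPerm
  refine ⟨inversionIndicator ∘ finitaryS.subtype, ⟨1, fun g => abs_inversionIndicator_le _⟩,
    leftUC_of_le_rightPeriods _ (H := (fiberStab colorZeroOne).comap finitaryS.subtype) ?_
      ((Subgroup.comap_mono fiberStab_colorZeroOne_le_rightPeriods).trans
        (comap_rightPeriods_le _ _)),
    not_rightUC_of_forall_mem_nhds _ one_pos fun U hU => ?_⟩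
  · rw [nhds_induced]
    exact preimage_mem_comap (fiberStab_mem_nhds colorZeroOne)
  rw [nhds_induced, mem_comap] at hU
  obtain ⟨W, hW, hWU⟩ := hU
  obtain ⟨n, c, hc⟩ := exists_fiberStab_subset hW
  obtain ⟨g, hg, hne, hgc⟩ := exists_mem_finitaryS_apply_ne_and_color_eq c
  exact ⟨⟨g, hg⟩, ⟨g * swap 0 1, mul_mem hg (swap_mem_finitaryS 0 1)⟩,
    hWU (hc (mul_inv_mul_swap_mem_fiberStab hgc)), (dist_inversionIndicator_mul_swap hne).ge⟩

theorem notFSIN_quotient : NotFSIN (TopologicalSpace.coinduced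
    (QuotientGroup.mk : Perm ℕ → Perm ℕ ⧸ finitaryS) tauPerm) := by
  let _ : TopologicalSpace (Perm ℕ) := tauPerm
  let _ : TopologicalSpace (Perm ℕ ⧸ finitaryS) := .coinduced QuotientGroup.mk tauPerm
  refine ⟨quotientRepeatIndicator,
    ⟨1, fun q => QuotientGroup.induction_on q fun g => abs_repeatIndicator_le _⟩,
    leftUC_of_le_rightPeriods _ ((isOpen_map_fiberStab mod3).mem_nhds (one_mem _))
      (map_le_rightPeriods_liftOfLeRightPeriods _ (fiberStab_le_rightPeriods_comp_inv _ _)),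
    not_rightUC_of_forall_mem_nhds _ one_pos fun U hU => ?_⟩
  have hmk : Continuous (QuotientGroup.mk : Perm ℕ → Perm ℕ ⧸ finitaryS) :=
    continuous_coinduced_rng
  obtain ⟨n, c, hc⟩ := exists_fiberStab_subset (hmk.continuousAt (x := 1) hU)
  obtain ⟨g, h, hgh, hg, hh⟩ := exists_mod3RepeatIndicator_eq_zero_one c
  refine ⟨g, h, hc hgh, ?_⟩
  change 1 ≤ dist (mod3RepeatIndicator g) (mod3RepeatIndicator h)
  simp [hg, hh]

/-- Proposition 3.6 (first part): none of the topological groups `(G, τ)`, `(S, τ|S)` and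
`G/S` (with the quotient topology) is FSIN. -/
theorem stmt_19 :
    NotFSIN tauPerm ∧
      NotFSIN (TopologicalSpace.induced (Subtype.val : ↥finitaryS → Equiv.Perm ℕ) tauPerm) ∧
      NotFSIN (TopologicalSpace.coinduced
        (QuotientGroup.mk : Equiv.Perm ℕ → Equiv.Perm ℕ ⧸ finitaryS) tauPerm) :=
  ⟨notFSIN_tauPerm, notFSIN_finitaryS, notFSIN_quotient⟩
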